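/- Fix signs ε = (ε_0,…,ε_n) ∈ {±1}^{n+1} and integers 0 ≤ j < i ≤ n. Then the intersection ⁿΓ_i^ε ∩ ⁿΓ_j^ε equals the closed boundary face of ⁿΓ_i^ε cut out by the additional equation h_{i,j}(σ_ε x) = 0; that is, every point of ⁿΓ_i^ε with h_{i,j}(σ_ε x) = 0 automatically lies on ⁿΓ_j^ε (it satisfies the equation and all the defining inequalities of ⁿΓ_j^ε), and conversely every common point of ⁿΓ_i^ε and ⁿΓ_j^ε satisfies h_{i,j}(σ_ε x) = 0. Moreover, at every point of this intersection the defining functions ε_0 h_i(σ_ε x)² and ε_0 h_j(σ_ε x)² have equal values and equal gradients, so the whole intersection is a tangency locus of the two pieces. -/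

import Mathlib

open scoped ContDiff

noncomputable section

/-- The polynomial `h_i` in the variables `x_1, …, x_i` (0-indexed: it depends on
coordinates `0, …, i-1`): `h_0 = 0`, `h_{i+1}(x) = x 0 - (h_i (x ∘ (·+1)))^2`. -/
def hpoly : ℕ → (ℕ → ℝ) → ℝ
  | 0, _ => 0
  | i + 1, x => x 0 - (hpoly i fun k => x (k + 1)) ^ 2

/-- Extension of a vector of `ℝⁿ` by zeros to an infinite sequence. -/
def extv {n : ℕ} (x : Fin n → ℝ) : ℕ → ℝ := fun k => if h : k < n then x ⟨k, h⟩ else 0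

/-- `h_{i,j}` as a function on `ℝⁿ` (0-indexed: it depends on coordinates `j, …, i-1`;
in the paper's notation `h_{i,j}(x) = h_{i-j}(x_{j+1}, …, x_i)`). -/
def hh (n i j : ℕ) (x : Fin n → ℝ) : ℝ := hpoly (i - j) fun k => extv x (j + k)

/-- The gradient of a function on `ℝⁿ`, via the Fréchet derivative. -/
def grad {n : ℕ} (f : (Fin n → ℝ) → ℝ) (x : Fin n → ℝ) : Fin n → ℝ :=
  fun k => fderiv ℝ f x (Pi.single k 1)

/-- The `m`-th standard basis vector of `ℝⁿ` (zero if `m ≥ n`). -/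
def evec (n m : ℕ) : Fin n → ℝ := fun k => if (k : ℕ) = m then 1 else 0

/-!
The recursion `h_{i,m} = x_m - h_{i,m+1}²` for `m < i`, with `h_{i,i} = 0`, drives everything.
If `h_{i,j}` vanishes, then `h_{i,m} = h_{j,m}` for all `m ≤ j` by descending induction, and so
do the derivatives of their squares, because the derivative of `h²` at a zero of `h` is zero.
Conversely, on `Γ_i ∩ Γ_j` the squares `h_{i,0}²` and `h_{j,0}²` agree; the sign conditions
`ε_m ε_{m+1} h_{·,m} ≤ 0` turn equal squares into equal values, which by the recursion give equal
squares one level up, so at level `j` we get `h_{i,j}² = h_{j,j}² = 0`. The gradients are then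
compared through the chain rule for the linear map `σ_ε`.
-/

lemma hh_of_le {n i m : ℕ} (h : i ≤ m) (z : Fin n → ℝ) : hh n i m z = 0 := by
  rw [hh, Nat.sub_eq_zero_of_le h, hpoly]

lemma hh_of_lt {n i m : ℕ} (h : m < i) (z : Fin n → ℝ) :
    hh n i m z = extv z m - hh n i (m + 1) z ^ 2 := by
  obtain ⟨d, hd⟩ : ∃ d, i - m = d + 1 := ⟨i - m - 1, by omega⟩
  rw [hh, hh, hd, show i - (m + 1) = d by omega, hpoly]
  simp only [add_zero, add_assoc, add_comm 1]

lemma differentiable_extv_apply (n m : ℕ) :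
    Differentiable ℝ fun z : Fin n → ℝ => extv z m := by
  unfold extv
  split_ifs
  · exact differentiable_apply _
  · exact differentiable_const 0

@[fun_prop]
lemma differentiable_hh (n i m : ℕ) : Differentiable ℝ (hh n i m) := by
  by_cases h : m < i
  · rw [show hh n i m = fun z => extv z m - hh n i (m + 1) z ^ 2 from funext (hh_of_lt h)]
    exact (differentiable_extv_apply n m).sub ((differentiable_hh n i (m + 1)).pow 2)
  · rw [show hh n i m = fun _ => 0 from funext (hh_of_le (not_lt.1 h))]
    exact differentiable_const 0
termination_by i - m

lemma fderiv_hh_of_lt {n i m : ℕ} (h : m < i) (z : Fin n → ℝ) :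
    fderiv ℝ (hh n i m) z =
      fderiv ℝ (fun y => extv y m) z - fderiv ℝ (fun y => hh n i (m + 1) y ^ 2) z := by
  rw [show hh n i m = fun y => extv y m - hh n i (m + 1) y ^ 2 from funext (hh_of_lt h)]
  exact fderiv_fun_sub (differentiable_extv_apply n m z) (by fun_prop)

lemma hh_eq_hh_of_hh_eq_zero {n i j m : ℕ} {z : Fin n → ℝ} (hji : j ≤ i)
    (h0 : hh n i j z = 0) (hm : m ≤ j) : hh n i m z = hh n j m z := by
  induction hm using Nat.decreasingInduction with
  | self => rw [h0, hh_of_le le_rfl]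
  | of_succ k hk ih => rw [hh_of_lt (hk.trans_le hji), hh_of_lt hk, ih]

lemma fderiv_sq_hh_eq_of_hh_eq_zero {n i j m : ℕ} {z : Fin n → ℝ} (hji : j ≤ i)
    (h0 : hh n i j z = 0) (hm : m ≤ j) :
    fderiv ℝ (fun y => hh n i m y ^ 2) z = fderiv ℝ (fun y => hh n j m y ^ 2) z := by
  induction hm using Nat.decreasingInduction with
  | self =>
    rw [fderiv_fun_pow 2 (differentiable_hh n i j z), fderiv_fun_pow 2 (differentiable_hh n j j z),
      h0, hh_of_le le_rfl]
    simp
  | of_succ k hk ih =>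
    rw [fderiv_fun_pow 2 (differentiable_hh n i k z), fderiv_fun_pow 2 (differentiable_hh n j k z),
      hh_eq_hh_of_hh_eq_zero hji h0 hk.le, fderiv_hh_of_lt (hk.trans_le hji), fderiv_hh_of_lt hk,
      ih]

lemma eq_of_sq_eq_of_mul_nonpos {c a b : ℝ} (hc : c ≠ 0) (ha : c * a ≤ 0) (hb : c * b ≤ 0)
    (h : a ^ 2 = b ^ 2) : a = b := by
  rcases sq_eq_sq_iff_eq_or_eq_neg.1 h with h | h
  · exact h
  · have hca : c * a = 0 := by rw [h] at ha ⊢; linarith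
    have ha0 := (mul_eq_zero.1 hca).resolve_left hc
    linarith

lemma hh_eq_zero_of_mul_hh_nonpos {n i j : ℕ} {z : Fin n → ℝ} (s : (m : ℕ) → m < j → ℝ)
    (hji : j ≤ i) (hs : ∀ m (hm : m < j), s m hm ≠ 0)
    (hi : ∀ m (hm : m < j), s m hm * hh n i m z ≤ 0)
    (hj : ∀ m (hm : m < j), s m hm * hh n j m z ≤ 0) (h0 : hh n i 0 z ^ 2 = hh n j 0 z ^ 2) :
    hh n i j z = 0 := by
  have hsq : ∀ m ≤ j, hh n i m z ^ 2 = hh n j m z ^ 2 := by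
    intro m hm
    induction m with
    | zero => exact h0
    | succ m ih =>
      have heq :=
        eq_of_sq_eq_of_mul_nonpos (hs m hm) (hi m hm) (hj m hm) (ih (Nat.le_of_succ_le hm))
      rw [hh_of_lt (show m < i by omega), hh_of_lt (show m < j by omega)] at heq
      linarith
  simpa [hh_of_le (le_refl j)] using hsq j le_rfl

lemma grad_comp_congr {n : ℕ} {f g : (Fin n → ℝ) → ℝ} {σ : (Fin n → ℝ) → Fin n → ℝ}
    {x : Fin n → ℝ} (hf : DifferentiableAt ℝ f (σ x)) (hg : DifferentiableAt ℝ g (σ x))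
    (hσ : DifferentiableAt ℝ σ x) (h : fderiv ℝ f (σ x) = fderiv ℝ g (σ x)) :
    grad (fun y => f (σ y)) x = grad (fun y => g (σ y)) x := by
  unfold grad
  rw [fderiv_fun_comp x hf hσ, fderiv_fun_comp x hg hσ, h]

/-- Fix signs `ε ∈ {±1}^{n+1}` and `0 ≤ j < i ≤ n`.  Then
`ⁿΓ_i^ε ∩ ⁿΓ_j^ε` equals the closed boundary face of `ⁿΓ_i^ε` cut out by `h_{i,j}(σ_ε x) = 0`:
every point of `ⁿΓ_i^ε` with `h_{i,j}(σ_ε x) = 0` lies on `ⁿΓ_j^ε` and conversely every common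
point satisfies `h_{i,j}(σ_ε x) = 0`.  Moreover, at every point of the intersection the defining
functions `ε_0 h_i(σ_ε x)²` and `ε_0 h_j(σ_ε x)²` have equal values and equal gradients. -/
theorem stmt_11 (n i j : ℕ) (hji : j < i) (hin : i ≤ n)
    (ε : Fin (n + 1) → ℝ) (hε : ∀ k, ε k = 1 ∨ ε k = -1)
    (σ : (Fin n → ℝ) → (Fin n → ℝ))
    (hσ : ∀ x m, σ x m = ε ⟨(m : ℕ) + 1, Nat.succ_lt_succ m.isLt⟩ * x m)
    (Γi Γj : Set (ℝ × (Fin n → ℝ)))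
    (hΓi : Γi = {z | z.1 = ε 0 * (hh n i 0 (σ z.2)) ^ 2 ∧
      ∀ m : ℕ, ∀ hm : m < i,
        ε ⟨m, Nat.lt_succ_of_lt (lt_of_lt_of_le hm hin)⟩ *
          ε ⟨m + 1, Nat.succ_lt_succ (lt_of_lt_of_le hm hin)⟩ * hh n i m (σ z.2) ≤ 0})
    (hΓj : Γj = {z | z.1 = ε 0 * (hh n j 0 (σ z.2)) ^ 2 ∧
      ∀ m : ℕ, ∀ hm : m < j,
        ε ⟨m, Nat.lt_succ_of_lt (lt_of_lt_of_le hm (le_of_lt (lt_of_lt_of_le hji hin)))⟩ *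
          ε ⟨m + 1, Nat.succ_lt_succ (lt_of_lt_of_le hm (le_of_lt (lt_of_lt_of_le hji hin)))⟩ *
          hh n j m (σ z.2) ≤ 0}) :
    Γi ∩ Γj = {z ∈ Γi | hh n i j (σ z.2) = 0} ∧
    ∀ z ∈ Γi ∩ Γj,
      ε 0 * (hh n i 0 (σ z.2)) ^ 2 = ε 0 * (hh n j 0 (σ z.2)) ^ 2 ∧
      grad (fun y => ε 0 * (hh n i 0 (σ y)) ^ 2) z.2
        = grad (fun y => ε 0 * (hh n j 0 (σ y)) ^ 2) z.2 := by
  have hε_ne : ∀ k, ε k ≠ 0 := fun k => by rcases hε k with h | h <;> simp [h]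
  have hσ_diff : Differentiable ℝ σ := by
    rw [show σ = fun (x : Fin n → ℝ) (m : Fin n) =>
      ε ⟨(m : ℕ) + 1, Nat.succ_lt_succ m.isLt⟩ * x m from funext fun x => funext (hσ x)]
    fun_prop
  have hΓj_of_face : ∀ z ∈ Γi, hh n i j (σ z.2) = 0 → z ∈ Γj := by
    rintro z hz h0
    rw [hΓi] at hz
    rw [hΓj]
    refine ⟨by rw [hz.1, hh_eq_hh_of_hh_eq_zero hji.le h0 (Nat.zero_le j)], fun m hm => ?_⟩
    rw [← hh_eq_hh_of_hh_eq_zero hji.le h0 hm.le]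
    exact hz.2 m (hm.trans hji)
  have hface : ∀ z ∈ Γi ∩ Γj, hh n i j (σ z.2) = 0 := by
    rintro z ⟨hzi, hzj⟩
    rw [hΓi] at hzi
    rw [hΓj] at hzj
    exact hh_eq_zero_of_mul_hh_nonpos (fun m hm => ε ⟨m, by omega⟩ * ε ⟨m + 1, by omega⟩)
      hji.le (fun _ _ => mul_ne_zero (hε_ne _) (hε_ne _)) (fun m hm => hzi.2 m (hm.trans hji))
      hzj.2 (mul_left_cancel₀ (hε_ne 0) (hzi.1.symm.trans hzj.1))
  refine ⟨Set.ext fun z => ⟨fun hz => ⟨hz.1, hface z hz⟩,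
    fun hz => ⟨hz.1, hΓj_of_face z hz.1 hz.2⟩⟩, fun z hz => ?_⟩
  have h0 := hface z hz
  refine ⟨by rw [hh_eq_hh_of_hh_eq_zero hji.le h0 (Nat.zero_le j)], ?_⟩
  refine grad_comp_congr (f := fun y => ε 0 * hh n i 0 y ^ 2)
    (g := fun y => ε 0 * hh n j 0 y ^ 2) (by fun_prop) (by fun_prop) hσ_diff.differentiableAt ?_
  rw [fderiv_const_mul (by fun_prop), fderiv_const_mul (by fun_prop),
    fderiv_sq_hh_eq_of_hh_eq_zero hji.le h0 (Nat.zero_le j)]
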